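/- Let (V,E) be a graph with terminal set S ⊆ V of size k and nonterminal node set {1,…,n}, edge-capacities c : E → ℝ≥0, and no edge joining two terminals. Identify S ∪ {0} with S_k (0 the minimal element, the terminals the nonzero elements). Then the minimum over p = (p_1,…,p_n) ∈ (S_k)^n of (1/2)·Σ_{i=1}^{n} Σ_{s ∈ S : si ∈ E} c(si)·δ₀(s, p_i) + (1/2)·Σ_{ij ∈ E, 1 ≤ i,j ≤ n} c(ij)·δ₀(p_i, p_j) equals (1/2)·Σ_{s∈S} κ_s, where κ_s is the minimum of c(δX) over all X with s ∈ X ⊆ V ∖ (S ∖ {s}). -/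

import Mathlib

/-!
Extend a labelling `p` of the nonterminals to all nodes by labelling every terminal with
itself; call the result `ℓ` and let `X_s` be the class of the label `s`. An edge `uv` crosses
exactly `δ₀(ℓ u, ℓ v)` of the sets `X_s`, so the objective equals
`(1/2) Σ_s c(δX_s) ≥ (1/2) Σ_s κ_s`. Conversely, by posimodularity
`c(δ(X∖Y)) + c(δ(Y∖X)) ≤ c(δX) + c(δY)` of the cut function, minimum `s`-isolating cuts of
least cardinality are pairwise disjoint, and the labelling that gives every node of such an
`X_s` the label `s` attains the bound.
-/

open SimpleGraph Finset

/-- The metric `δ₀` on `S_k` (modelled as `Option α`, with `none` the element `0`):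
`δ₀(u,v) = 0` if `u = v`, `1` if exactly one of `u, v` is `0`, and `2` otherwise. -/
def delta0 {α : Type*} [DecidableEq α] (u v : Option α) : ℝ :=
  if u = v then 0 else if u = none ∨ v = none then 1 else 2

open Classical in
/-- The capacity `c(δX)` of the cut `δX`. -/
noncomputable def cutCap {V : Type*} [Fintype V] [DecidableEq V]
    (G : SimpleGraph V) [DecidableRel G.Adj] (c : Sym2 V → ℝ) (X : Finset V) : ℝ :=
  ∑ e ∈ G.edgeFinset,
    if Sym2.lift ⟨fun i j => ((i ∈ X ∧ j ∉ X) ∨ (j ∈ X ∧ i ∉ X) : Prop),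
        fun i j => propext (by tauto)⟩ e then c e else 0

open Classical in
/-- The objective
`(1/2)·Σ_{i=1}^{n} Σ_{s ∈ S : si ∈ E} c(si)·δ₀(s, p_i) +
 (1/2)·Σ_{ij ∈ E, i,j nonterminal} c(ij)·δ₀(p_i, p_j)`
of the `k`-submodular dual of the maximum free multiflow problem. -/
noncomputable def lcObj {V : Type*} [Fintype V] [DecidableEq V]
    (G : SimpleGraph V) [DecidableRel G.Adj] (S : Finset V) (c : Sym2 V → ℝ)
    (p : V → Option V) : ℝ :=
  (∑ i ∈ Finset.univ \ S, ∑ s ∈ S,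
      if G.Adj s i then c s(s, i) * delta0 (some s) (p i) else 0) / 2 +
  (∑ e ∈ G.edgeFinset,
      if (∀ v ∈ e, v ∉ S) then
        c e * Sym2.lift ⟨fun i j => delta0 (p i) (p j), fun i j => by
          simp only [delta0]
          by_cases h : p i = p j
          · rw [if_pos h, if_pos h.symm]
          · rw [if_neg h, if_neg (fun h' : p j = p i => h h'.symm)]
            exact if_congr or_comm rfl rfl⟩ e
      else 0) / 2

lemma delta0_comm {α : Type*} [DecidableEq α] (u v : Option α) : delta0 u v = delta0 v u := by
  unfold delta0
  grind

lemma sum_ite_xor_eq_delta0 {α : Type*} [DecidableEq α] (S : Finset α) {x y : Option α}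
    (hx : ∀ a, x = some a → a ∈ S) (hy : ∀ b, y = some b → b ∈ S) :
    ∑ s ∈ S, (if (x = some s ∧ y ≠ some s) ∨ (y = some s ∧ x ≠ some s) then (1 : ℝ) else 0)
      = delta0 x y := by
  rcases x with _ | a <;> rcases y with _ | b
  · simp [delta0]
  · simp [delta0, hy b rfl]
  · simp [delta0, hx a rfl]
  · by_cases hab : a = b
    · subst hab
      simp [delta0]
    · have hxor : ∀ s, ((a = s ∧ b ≠ s) ∨ (b = s ∧ a ≠ s)) ↔ (a = s ∨ b = s) := by grind
      simp only [Option.some.injEq, ne_eq, hxor, Finset.sum_boole, Finset.filter_or,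
        Finset.filter_eq, hx a rfl, hy b rfl, if_true]
      simp [delta0, hab, Finset.card_pair hab]

section
variable {V : Type*} [DecidableEq V]

def extendLabel (S : Finset V) (p : V → Option V) (w : V) : Option V :=
  if w ∈ S then some w else p w

def edgeDelta (S : Finset V) (p : V → Option V) : Sym2 V → ℝ :=
  Sym2.lift ⟨fun u v => delta0 (extendLabel S p u) (extendLabel S p v),
    fun _ _ => delta0_comm _ _⟩

@[simp] lemma edgeDelta_mk (S : Finset V) (p : V → Option V) (u v : V) :
    edgeDelta S p s(u, v) = delta0 (extendLabel S p u) (extendLabel S p v) := rfl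

def IsIsolating (S : Finset V) (s : V) (X : Finset V) : Prop :=
  s ∈ X ∧ ∀ t ∈ S, t ∈ X → t = s

lemma IsIsolating.sdiff {S X : Finset V} {s : V} (hX : IsIsolating S s X) (Y : Finset V)
    (hsY : s ∉ Y) : IsIsolating S s (X \ Y) :=
  ⟨mem_sdiff.2 ⟨hX.1, hsY⟩, fun t ht htX => hX.2 t ht (mem_sdiff.1 htX).1⟩

variable [Fintype V]

def labelClass (S : Finset V) (p : V → Option V) (s : V) : Finset V :=
  {w | extendLabel S p w = some s}

@[simp] lemma mem_labelClass {S : Finset V} {p : V → Option V} {s w : V} :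
    w ∈ labelClass S p s ↔ extendLabel S p w = some s := by
  simp [labelClass]

lemma isIsolating_labelClass (S : Finset V) (p : V → Option V) {s : V} (hs : s ∈ S) :
    IsIsolating S s (labelClass S p s) := by
  refine ⟨by simp [extendLabel, hs], fun t ht htX => ?_⟩
  simpa [extendLabel, ht, eq_comm] using htX

variable (G : SimpleGraph V) [DecidableRel G.Adj]

lemma cutCap_sdiff_add_cutCap_sdiff_le {c : Sym2 V → ℝ} (hc : ∀ e, 0 ≤ c e) (X Y : Finset V) :
    cutCap G c (X \ Y) + cutCap G c (Y \ X) ≤ cutCap G c X + cutCap G c Y := by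
  unfold cutCap
  rw [← sum_add_distrib, ← sum_add_distrib]
  refine sum_le_sum fun e _ => ?_
  induction e using Sym2.ind with
  | _ u v =>
    have := hc s(u, v)
    simp only [Sym2.lift_mk, mem_sdiff]
    by_cases hux : u ∈ X <;> by_cases huy : u ∈ Y <;> by_cases hvx : v ∈ X <;>
      by_cases hvy : v ∈ Y <;> simp [hux, huy, hvx, hvy] <;> linarith

lemma sum_cutCap_labelClass (S : Finset V) (c : Sym2 V → ℝ) {p : V → Option V}
    (hp : ∀ i s, p i = some s → s ∈ S) :
    ∑ s ∈ S, cutCap G c (labelClass S p s) = ∑ e ∈ G.edgeFinset, c e * edgeDelta S p e := by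
  have hlabel : ∀ w s, extendLabel S p w = some s → s ∈ S := by
    intro w s h
    unfold extendLabel at h
    split_ifs at h with hw
    · exact Option.some.inj h ▸ hw
    · exact hp w s h
  unfold cutCap
  rw [sum_comm]
  refine sum_congr rfl fun e _ => ?_
  induction e using Sym2.ind with
  | _ u v =>
    rw [edgeDelta_mk, ← sum_ite_xor_eq_delta0 S (hlabel u) (hlabel v), mul_sum]
    refine sum_congr rfl fun s _ => ?_
    simp

lemma lcObj_eq (S : Finset V) (c : Sym2 V → ℝ) (p : V → Option V)
    (hSfree : ∀ s ∈ S, ∀ t ∈ S, ¬ G.Adj s t) :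
    lcObj G S c p = (∑ e ∈ G.edgeFinset, c e * edgeDelta S p e) / 2 := by
  classical
  rw [← sum_filter_not_add_sum_filter G.edgeFinset (fun e => ∀ v ∈ e, v ∉ S), add_div]
  unfold lcObj
  congr 2
  · -- `(i, s) ↦ s(s, i)` is a bijection onto the edges meeting `S`, as no edge joins two terminals
    rw [← sum_product', ← sum_filter]
    refine sum_bij (fun x _ => s(x.2, x.1)) ?_ ?_ ?_ ?_
    · rintro ⟨i, s⟩ hx
      simp only [mem_filter, mem_product, mem_sdiff, mem_univ, true_and] at hx
      simp only [mem_filter, mem_edgeFinset, SimpleGraph.mem_edgeSet, Sym2.mem_iff]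
      exact ⟨hx.2, fun h => h s (Or.inl rfl) hx.1.2⟩
    · rintro ⟨i, s⟩ hx ⟨j, t⟩ hy hst
      simp only [mem_filter, mem_product, mem_sdiff, mem_univ, true_and] at hx hy
      rcases Sym2.eq_iff.1 hst with ⟨rfl, rfl⟩ | ⟨rfl, rfl⟩
      · rfl
      · exact absurd hy.1.2 hx.1.1
    · intro e he
      induction e using Sym2.ind with
      | _ u v =>
        simp only [mem_filter, mem_edgeFinset, SimpleGraph.mem_edgeSet, Sym2.mem_iff] at he
        obtain ⟨huv, hmeet⟩ := he
        by_cases hu : u ∈ S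
        · have hv : v ∉ S := fun hv => hSfree u hu v hv huv
          exact ⟨(v, u), by simpa [hu, hv] using huv, rfl⟩
        · have hv : v ∈ S := by
            by_contra hv
            exact hmeet fun w hw => by rcases hw with rfl | rfl <;> assumption
          exact ⟨(u, v), by simpa [hu, hv] using huv.symm, Sym2.eq_swap⟩
    · rintro ⟨i, s⟩ hx
      simp only [mem_filter, mem_product, mem_sdiff, mem_univ, true_and] at hx
      simp [extendLabel, hx.1.1, hx.1.2]
  · rw [sum_filter]
    refine sum_congr rfl fun e _ => ?_
    induction e using Sym2.ind with
    | _ u v =>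
      split_ifs with h
      · simp_all [extendLabel]
      · rfl

lemma lcObj_eq_sum_cutCap_labelClass {S : Finset V} (c : Sym2 V → ℝ) {p : V → Option V}
    (hp : ∀ i s, p i = some s → s ∈ S) (hSfree : ∀ s ∈ S, ∀ t ∈ S, ¬ G.Adj s t) :
    lcObj G S c p = (∑ s ∈ S, cutCap G c (labelClass S p s)) / 2 := by
  rw [lcObj_eq G S c p hSfree, sum_cutCap_labelClass G S c hp]

lemma exists_pairwiseDisjoint_minCuts (S : Finset V) {c : Sym2 V → ℝ} (hc : ∀ e, 0 ≤ c e)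
    (κ : V → ℝ) (hκ : ∀ s ∈ S, IsLeast
      {v : ℝ | ∃ X : Finset V, s ∈ X ∧ (∀ t ∈ S, t ∈ X → t = s) ∧ cutCap G c X = v} (κ s)) :
    ∃ X : V → Finset V, (∀ s ∈ S, IsIsolating S s (X s) ∧ cutCap G c (X s) = κ s) ∧
      (S : Set V).PairwiseDisjoint X := by
  classical
  have hmin : ∀ s ∈ S, ∃ X, (IsIsolating S s X ∧ cutCap G c X = κ s) ∧
      ∀ Y, IsIsolating S s Y ∧ cutCap G c Y = κ s → X.card ≤ Y.card := by
    intro s hs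
    obtain ⟨X, hsX, hXS, hXc⟩ := (hκ s hs).1
    obtain ⟨Y, hY, hYmin⟩ := ({X | IsIsolating S s X ∧ cutCap G c X = κ s} : Finset _)
      |>.exists_min_image card ⟨X, by simpa using ⟨⟨hsX, hXS⟩, hXc⟩⟩
    exact ⟨Y, by simpa using hY, fun Z hZ => hYmin Z (by simpa using hZ)⟩
  choose! X hX hXmin using hmin
  refine ⟨X, hX, fun s hs t ht hst => ?_⟩
  have hsXt : s ∉ X t := fun h => hst ((hX t ht).1.2 s hs h)
  have htXs : t ∉ X s := fun h => hst ((hX s hs).1.2 t ht h).symm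
  have hsdiff := (hX s hs).1.sdiff (X t) hsXt
  have htdiff := (hX t ht).1.sdiff (X s) htXs
  have hs_le := (hκ s hs).2 ⟨_, hsdiff.1, hsdiff.2, rfl⟩
  have ht_le := (hκ t ht).2 ⟨_, htdiff.1, htdiff.2, rfl⟩
  have hposi := cutCap_sdiff_add_cutCap_sdiff_le G hc (X s) (X t)
  rw [(hX s hs).2, (hX t ht).2] at hposi
  have hcard := hXmin s hs (X s \ X t) ⟨hsdiff, by linarith⟩
  exact sdiff_eq_self_iff_disjoint.1 (eq_of_subset_of_card_le sdiff_subset hcard)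

lemma exists_labelClass_eq {S : Finset V} {X : V → Finset V}
    (hX : ∀ s ∈ S, IsIsolating S s (X s)) (hdisj : (S : Set V).PairwiseDisjoint X) :
    ∃ p : V → Option V, (∀ i s, p i = some s → s ∈ S) ∧ ∀ s ∈ S, labelClass S p s = X s := by
  classical
  let p : V → Option V := fun i => if h : ∃ s ∈ S, i ∈ X s then some h.choose else none
  have hp : ∀ i s, p i = some s → s ∈ S ∧ i ∈ X s := by
    intro i s hi
    by_cases h : ∃ s ∈ S, i ∈ X s
    · simp only [p, dif_pos h, Option.some.injEq] at hi
      exact hi ▸ h.choose_spec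
    · simp [p, dif_neg h] at hi
  have hp_iff : ∀ i, ∀ s ∈ S, p i = some s ↔ i ∈ X s := by
    refine fun i s hs => ⟨fun hi => (hp i s hi).2, fun hi => ?_⟩
    have h : ∃ s ∈ S, i ∈ X s := ⟨s, hs, hi⟩
    simp only [p, dif_pos h, Option.some.injEq]
    by_contra hne
    exact disjoint_left.1 (hdisj h.choose_spec.1 hs hne) h.choose_spec.2 hi
  refine ⟨p, fun i s hi => (hp i s hi).1, fun s hs => ?_⟩
  ext w
  by_cases hw : w ∈ S
  · simp only [mem_labelClass, extendLabel, if_pos hw, Option.some.injEq]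
    exact ⟨fun h => h ▸ (hX w hw).1, (hX s hs).2 w hw⟩
  · simp only [mem_labelClass, extendLabel, if_neg hw]
    exact hp_iff w s hs
end

/-- Section 3.4.1: Lovász–Cherkassky via `k`-submodular minimization.
For a graph with terminal set `S` (no edge joining two terminals) and nonterminal
nodes carrying labels in `S_k = S ∪ {0}`, the minimum of the `k`-submodular relaxation
objective equals `(1/2)·Σ_{s ∈ S} κ_s`, where `κ_s` is the minimum capacity of an
`(s, S∖{s})`-cut. -/
theorem stmt19 {V : Type*} [Fintype V] [DecidableEq V]
    (G : SimpleGraph V) [DecidableRel G.Adj] (S : Finset V)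
    (c : Sym2 V → ℝ) (hc : ∀ e, 0 ≤ c e)
    (hSfree : ∀ s ∈ S, ∀ t ∈ S, ¬ G.Adj s t)
    (κ : V → ℝ)
    (hκ : ∀ s ∈ S, IsLeast
      {v : ℝ | ∃ X : Finset V, s ∈ X ∧ (∀ t ∈ S, t ∈ X → t = s) ∧ cutCap G c X = v}
      (κ s)) :
    IsLeast
      {v : ℝ | ∃ p : V → Option V, (∀ i s, p i = some s → s ∈ S) ∧ lcObj G S c p = v}
      ((∑ s ∈ S, κ s) / 2) := by
  constructor
  · obtain ⟨X, hXmin, hdisj⟩ := exists_pairwiseDisjoint_minCuts G S hc κ hκ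
    obtain ⟨p, hp, hpX⟩ := exists_labelClass_eq (fun s hs => (hXmin s hs).1) hdisj
    refine ⟨p, hp, ?_⟩
    rw [lcObj_eq_sum_cutCap_labelClass G c hp hSfree]
    exact congrArg (· / 2) (sum_congr rfl fun s hs => by rw [hpX s hs, (hXmin s hs).2])
  · rintro _ ⟨p, hp, rfl⟩
    rw [lcObj_eq_sum_cutCap_labelClass G c hp hSfree]
    gcongr with s hs
    obtain ⟨hsX, hXS⟩ := isIsolating_labelClass S p hs
    exact (hκ s hs).2 ⟨_, hsX, hXS, rfl⟩
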